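/- Let (R, m) be a Noetherian local ring of dimension d and characteristic p > 0 with a test element, and let I be an m-primary ideal. Then lim_{q→∞} λ(R/(I^{[q]})*)/q^d exists and equals the Hilbert–Kunz multiplicity e_HK(I) = lim_{q→∞} λ(R/I^{[q]})/q^d. -/

import Mathlib

open IsLocalRing Filter

set_option linter.unusedVariables false

/-- The length of an `R`-module `M`, defined as the Krull dimension of its submodule
lattice (valued in `ℕ∞`; the lattice is never empty so `unbot'` is harmless). -/
noncomputable def mLength (R M : Type*) [Ring R] [AddCommGroup M] [Module R M] : ℕ∞ :=
  WithBot.unbotD 0 (Order.krullDim (Submodule R M))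

/-- The length `λ(B/A)` of the subquotient of two ideals `A ≤ B`. -/
noncomputable def qLength (R : Type*) [CommRing R] (A B : Ideal R) : ℕ∞ :=
  mLength R (↥B ⧸ (Submodule.comap B.subtype A))

/-- The ideal `(x₁^{k₁}, …, x_d^{k_d})`. -/
def spow {R : Type*} [CommRing R] {d : ℕ} (x : Fin d → R) (k : Fin d → ℕ) : Ideal R :=
  Ideal.span (Set.range fun i => x i ^ k i)

/-- `x₁, …, x_d` is a system of parameters: `d = dim R` and the ideal it generates is
`m`-primary (radical equal to the maximal ideal). -/
def IsSOP (R : Type*) [CommRing R] [IsLocalRing R] {d : ℕ} (x : Fin d → R) : Prop :=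
  ringKrullDim R = d ∧ (Ideal.span (Set.range x)).radical = maximalIdeal R

/-- A parameter ideal: an ideal generated by a full system of parameters. -/
def IsParameterIdeal (R : Type*) [CommRing R] [IsLocalRing R] (I : Ideal R) : Prop :=
  ∃ (d : ℕ) (x : Fin d → R), IsSOP R x ∧ I = Ideal.span (Set.range x)

/-- The Frobenius power `I^{[q]}`, generated by `q`-th powers of elements of `I`. -/
def frobPow {R : Type*} [CommRing R] (q : ℕ) (I : Ideal R) : Ideal R :=
  Ideal.span ((fun a => a ^ q) '' (I : Set R))

/-- Tight closure of an ideal in a ring of characteristic `p`. -/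
def tightClosure {R : Type*} [CommRing R] (p : ℕ) (I : Ideal R) : Set R :=
  {x | ∃ c : R, (∀ P ∈ minimalPrimes R, c ∉ P) ∧
    ∃ N : ℕ, ∀ e ≥ N, c * x ^ p ^ e ∈ frobPow (p ^ e) I}

/-- A test element: an element of `R°` multiplying the tight closure of every ideal
back into the ideal. -/
def IsTestElement {R : Type*} [CommRing R] (p : ℕ) (c : R) : Prop :=
  (∀ P ∈ minimalPrimes R, c ∉ P) ∧ ∀ I : Ideal R, ∀ x ∈ tightClosure p I, c * x ∈ I


section MLen

variable {R M M' : Type*} [Ring R] [AddCommGroup M] [Module R M]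
  [AddCommGroup M'] [Module R M']

lemma unbot'_zero_mono {a b : WithBot ℕ∞} (h : a ≤ b) : WithBot.unbotD 0 a ≤ WithBot.unbotD 0 b := by
  cases a with
  | bot => simp
  | coe a =>
    cases b with
    | bot => simp at h
    | coe b => simpa using h

lemma mLength_le_of_forall_chain {c : ℕ∞}
    (h : ∀ p : LTSeries (Submodule R M), (p.length : ℕ∞) ≤ c) : mLength R M ≤ c := by
  have h2 : Order.krullDim (Submodule R M) ≤ (c : WithBot ℕ∞) := by
    rw [Order.krullDim_eq_iSup_length]
    exact_mod_cast iSup_le fun p => h p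
  calc WithBot.unbotD 0 (Order.krullDim (Submodule R M)) ≤ WithBot.unbotD 0 (c : WithBot ℕ∞) :=
        unbot'_zero_mono h2
    _ = c := rfl

lemma chain_length_le_mLength (p : LTSeries (Submodule R M)) :
    (p.length : ℕ∞) ≤ mLength R M := by
  have h2 : (p.length : ℕ∞) ≤ ⨆ (q : LTSeries (Submodule R M)), (q.length : ℕ∞) :=
    le_iSup (fun q : LTSeries (Submodule R M) => (q.length : ℕ∞)) p
  calc (p.length : ℕ∞) ≤ _ := h2
    _ = mLength R M := by
        rw [mLength, Order.krullDim_eq_iSup_length]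
        rfl

lemma height_le_mLength (W : Submodule R M) : Order.height W ≤ mLength R M := by
  have h := Order.height_le_krullDim W
  rw [Order.krullDim_eq_iSup_length] at h
  rw [mLength, Order.krullDim_eq_iSup_length]
  exact_mod_cast h

lemma mLength_le_of_surjective (f : M →ₗ[R] M') (hf : Function.Surjective f) :
    mLength R M' ≤ mLength R M := by
  apply unbot'_zero_mono
  apply Order.krullDim_le_of_strictMono (Submodule.comap f)
  intro W W' hlt
  refine lt_of_le_of_ne (Submodule.comap_mono hlt.le) fun heq => ?_
  have := congrArg (Submodule.map f) heq
  rw [Submodule.map_comap_eq_of_surjective hf, Submodule.map_comap_eq_of_surjective hf] at this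
  exact hlt.ne this

lemma mLength_eq_of_equiv (e : M ≃ₗ[R] M') : mLength R M = mLength R M' := by
  unfold mLength
  rw [Order.krullDim_eq_of_orderIso (Submodule.orderIsoMapComap e)]

lemma mLength_eq_zero_of_subsingleton [Subsingleton M] : mLength R M = 0 := by
  have h : mLength R M ≤ 0 := by
    apply mLength_le_of_forall_chain
    intro p
    by_contra h
    have h2 : 0 < p.length := by
      by_contra h3
      push_neg at h3
      interval_cases hl : p.length <;> simp_all
    have := p.step ⟨0, h2⟩
    exact (show p.toFun _ < p.toFun _ from this).ne (Subsingleton.elim _ _)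
  simpa using h

lemma mLength_le_one_of_bot_or_top (h : ∀ W : Submodule R M, W = ⊥ ∨ W = ⊤) :
    mLength R M ≤ 1 := by
  apply mLength_le_of_forall_chain
  intro p
  by_contra hc
  push_neg at hc
  have h2 : 2 ≤ p.length := by exact_mod_cast hc
  have l01 : p ⟨0, by omega⟩ < p ⟨1, by omega⟩ :=
    p.strictMono (Fin.mk_lt_mk.mpr (by omega))
  have l12 : p ⟨1, by omega⟩ < p ⟨2, by omega⟩ :=
    p.strictMono (Fin.mk_lt_mk.mpr (by omega))
  rcases h (p ⟨1, by omega⟩) with h1 | h1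
  · rw [h1] at l01; exact (not_lt_bot l01)
  · rw [h1] at l12; exact (not_top_lt l12)

private lemma enat_step {a b a' b' i : ℕ∞} (h : i ≤ a + b) (h1 : a ≤ a') (h2 : b ≤ b')
    (hs : a < a' ∨ b < b') : i + 1 ≤ a' + b' := by
  rcases hs with hs | hs
  · have : a + 1 ≤ a' := Order.add_one_le_of_lt hs
    calc i + 1 ≤ (a + b) + 1 := by
          exact add_le_add_left h 1
      _ = (a + 1) + b := by
          rw [add_assoc, add_comm b 1, ← add_assoc]
      _ ≤ a' + b' := add_le_add this h2
  · have : b + 1 ≤ b' := Order.add_one_le_of_lt hs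
    calc i + 1 ≤ (a + b) + 1 := add_le_add_left h 1
      _ = a + (b + 1) := by rw [add_assoc]
      _ ≤ a' + b' := add_le_add h1 this

lemma mLength_le_add (N : Submodule R M) :
    mLength R M ≤ mLength R N + mLength R (M ⧸ N) := by
  apply mLength_le_of_forall_chain
  intro p
  have key : ∀ i : Fin (p.length + 1), ((i : ℕ) : ℕ∞) ≤
      Order.height (Submodule.comap N.subtype (p i))
        + Order.height (Submodule.map N.mkQ (p i)) := by
    intro i
    induction i using Fin.induction with
    | zero => simp
    | succ i ih =>
      have hstep : p i.castSucc < p i.succ := p.step i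
      have hle1 : Submodule.comap N.subtype (p i.castSucc) ≤ Submodule.comap N.subtype (p i.succ) :=
        Submodule.comap_mono hstep.le
      have hle2 : Submodule.map N.mkQ (p i.castSucc) ≤ Submodule.map N.mkQ (p i.succ) :=
        Submodule.map_mono hstep.le
      have hs : Submodule.comap N.subtype (p i.castSucc) < Submodule.comap N.subtype (p i.succ)
          ∨ Submodule.map N.mkQ (p i.castSucc) < Submodule.map N.mkQ (p i.succ) := by
        by_contra hcon
        push_neg at hcon
        obtain ⟨h1, h2⟩ := hcon
        have e1 : Submodule.comap N.subtype (p i.castSucc)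
            = Submodule.comap N.subtype (p i.succ) := by
          rcases hle1.lt_or_eq with h | h
          · exact absurd h h1
          · exact h
        have e2 : Submodule.map N.mkQ (p i.castSucc) = Submodule.map N.mkQ (p i.succ) := by
          rcases hle2.lt_or_eq with h | h
          · exact absurd h h2
          · exact h
        have einf : N ⊓ p i.castSucc = N ⊓ p i.succ := by
          have := congrArg (Submodule.map N.subtype) e1
          rwa [Submodule.map_comap_subtype, Submodule.map_comap_subtype] at this
        have esup : p i.castSucc ⊔ N = p i.succ ⊔ N := by
          have := congrArg (Submodule.comap N.mkQ) e2
          rwa [Submodule.comap_map_eq, Submodule.comap_map_eq, Submodule.ker_mkQ] at this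
        have : p i.castSucc = p i.succ := by
          apply eq_of_le_of_inf_le_of_sup_le hstep.le
          · rw [inf_comm (p i.succ) N, ← einf, inf_comm]
          · rw [esup]
        exact hstep.ne this
      by_cases htop : Order.height (Submodule.comap N.subtype (p i.succ))
          + Order.height (Submodule.map N.mkQ (p i.succ)) = ⊤
      · rw [htop]; exact le_top
      · have hfin1 : Order.height (Submodule.comap N.subtype (p i.succ)) < ⊤ := by
          rcases WithTop.add_ne_top.mp htop with ⟨h1, _⟩
          exact lt_top_iff_ne_top.mpr h1
        have hfin2 : Order.height (Submodule.map N.mkQ (p i.succ)) < ⊤ := by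
          rcases WithTop.add_ne_top.mp htop with ⟨_, h2⟩
          exact lt_top_iff_ne_top.mpr h2
        have hs' : Order.height (Submodule.comap N.subtype (p i.castSucc))
              < Order.height (Submodule.comap N.subtype (p i.succ))
            ∨ Order.height (Submodule.map N.mkQ (p i.castSucc))
              < Order.height (Submodule.map N.mkQ (p i.succ)) := by
          rcases hs with hs | hs
          · exact Or.inl (Order.height_strictMono hs
              (lt_of_le_of_lt (Order.height_mono hle1) hfin1))
          · exact Or.inr (Order.height_strictMono hs
              (lt_of_le_of_lt (Order.height_mono hle2) hfin2))
        have := enat_step ih (Order.height_mono hle1) (Order.height_mono hle2) hs'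
        calc ((i.succ : ℕ) : ℕ∞) = ((i : ℕ) : ℕ∞) + 1 := by
              push_cast [Fin.val_succ]; ring
          _ ≤ _ := this
  calc (p.length : ℕ∞) = ((Fin.last p.length : ℕ) : ℕ∞) := by simp
    _ ≤ Order.height (Submodule.comap N.subtype (p (Fin.last p.length)))
        + Order.height (Submodule.map N.mkQ (p (Fin.last p.length))) := key _
    _ ≤ mLength R N + mLength R (M ⧸ N) :=
        add_le_add (height_le_mLength _) (height_le_mLength _)

end MLen

section Fin
variable {R : Type u} [CommRing R] [IsLocalRing R]

lemma mLength_le_one_of_cyclic {M : Type v} [AddCommGroup M] [Module R M]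
    (v : M) (hv : Submodule.span R {v} = ⊤)
    (hkill : ∀ x ∈ maximalIdeal R, ∀ w : M, x • w = 0) : mLength R M ≤ 1 := by
  apply mLength_le_one_of_bot_or_top
  intro W
  by_cases hW : W = ⊥
  · exact Or.inl hW
  · refine Or.inr ?_
    obtain ⟨w, hwW, hw0⟩ := Submodule.exists_mem_ne_zero_of_ne_bot hW
    have hwv : w ∈ Submodule.span R {v} := by rw [hv]; trivial
    obtain ⟨r, rfl⟩ := Submodule.mem_span_singleton.mp hwv
    have hr : IsUnit r := by
      by_contra hr
      exact hw0 (hkill r ((mem_maximalIdeal r).mpr hr) v)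
    obtain ⟨u, rfl⟩ := hr
    rw [eq_top_iff, ← hv, Submodule.span_le, Set.singleton_subset_iff]
    have : ((u⁻¹ : Rˣ) : R) • ((u : R) • v) = v := by
      rw [smul_smul, Units.inv_mul, one_smul]
    rw [← this]
    exact W.smul_mem _ hwW

omit [IsLocalRing R] in
lemma span_subtype_top_of_span_eq {M : Type v} [AddCommGroup M] [Module R M]
    {N : Submodule R M} {s : Set ↥N}
    (h : Submodule.span R ((N.subtype : ↥N →ₗ[R] M) '' s) = N) :
    Submodule.span R s = ⊤ := by
  apply Submodule.map_injective_of_injective N.injective_subtype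
  rw [Submodule.map_span, h, Submodule.map_top, Submodule.range_subtype]

lemma mLength_lt_top_of_fin (t : ℕ) : ∀ (M : Type v) [AddCommGroup M] [Module R M]
    (g : Fin t → M), Submodule.span R (Set.range g) = ⊤ →
    (∀ x ∈ maximalIdeal R, ∀ w : M, x • w = 0) → mLength R M < ⊤ := by
  induction t with
  | zero =>
    intro M _ _ g hg hkill
    have : Subsingleton M := by
      constructor
      intro a b
      have : ∀ m : M, m ∈ (⊥ : Submodule R M) := by
        intro m
        rw [← Submodule.span_empty (R := R) (M := M), ← Set.range_eq_empty g, hg]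
        trivial
      have ha := Submodule.mem_bot R |>.mp (this a)
      have hb := Submodule.mem_bot R |>.mp (this b)
      rw [ha, hb]
    rw [mLength_eq_zero_of_subsingleton]
    exact WithTop.top_pos
  | succ t ih =>
    intro M _ _ g hg hkill
    set N := Submodule.span R (Set.range (g ∘ Fin.succ)) with hN
    have hgN : ∀ i : Fin t, g i.succ ∈ N := fun i => Submodule.subset_span ⟨i, rfl⟩
    have hNlen : mLength R ↥N < ⊤ := by
      refine ih ↥N (fun i => ⟨g i.succ, hgN i⟩) ?_ ?_
      · apply span_subtype_top_of_span_eq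
        have himg : (⇑N.subtype '' Set.range fun i => (⟨g i.succ, hgN i⟩ : ↥N))
            = Set.range (g ∘ Fin.succ) := by
          ext y
          constructor
          · rintro ⟨⟨z, hz⟩, ⟨i, hi⟩, rfl⟩
            exact ⟨i, by simp [← hi]⟩
          · rintro ⟨i, rfl⟩
            exact ⟨⟨g i.succ, hgN i⟩, ⟨i, rfl⟩, rfl⟩
        rw [himg]
      · intro x hx w
        ext
        exact hkill x hx _
    have hQlen : mLength R (M ⧸ N) ≤ 1 := by
      apply mLength_le_one_of_cyclic (N.mkQ (g 0))
      · rw [eq_top_iff]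
        have h1 : Submodule.map N.mkQ ⊤ = ⊤ := by
          rw [Submodule.map_top, Submodule.range_mkQ]
        rw [← h1, ← hg, Submodule.map_span, Submodule.span_le]
        rintro y ⟨z, ⟨i, rfl⟩, rfl⟩
        induction i using Fin.cases with
        | zero => exact Submodule.subset_span rfl
        | succ j =>
          have : N.mkQ (g j.succ) = 0 := by
            rw [Submodule.mkQ_apply, Submodule.Quotient.mk_eq_zero]
            exact hgN j
          rw [this]
          exact Submodule.zero_mem _
      · intro x hx w
        obtain ⟨w', rfl⟩ := N.mkQ_surjective w
        rw [← map_smul, hkill x hx, map_zero]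
    calc mLength R M ≤ mLength R ↥N + mLength R (M ⧸ N) := mLength_le_add N
      _ ≤ mLength R ↥N + 1 := add_le_add_right hQlen _
      _ < ⊤ := by
          rw [ENat.add_lt_top]
          exact ⟨hNlen, lt_top_iff_ne_top.mpr (by simp)⟩

omit [IsLocalRing R] in
lemma mLength_quot_mono {K K' : Ideal R} (h : K ≤ K') :
    mLength R (R ⧸ K') ≤ mLength R (R ⧸ K) := by
  apply mLength_le_of_surjective (Submodule.mapQ K K' LinearMap.id h)
  intro y
  obtain ⟨x, rfl⟩ := K'.mkQ_surjective y
  exact ⟨K.mkQ x, by rw [Submodule.mkQ_apply, Submodule.mapQ_apply, LinearMap.id_apply,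
    Submodule.mkQ_apply]⟩

omit [IsLocalRing R] in
lemma exists_fin_span_top {M : Type v} [AddCommGroup M] [Module R M]
    {N : Submodule R M} (hN : N.FG) : ∃ t : ℕ, ∃ g : Fin t → ↥N,
    Submodule.span R (Set.range g) = ⊤ := by
  obtain ⟨t, s, hs⟩ := Submodule.fg_iff_exists_fin_generating_family.mp hN
  have hmem : ∀ i, s i ∈ N := fun i => hs ▸ Submodule.subset_span ⟨i, rfl⟩
  refine ⟨t, fun i => ⟨s i, hmem i⟩, span_subtype_top_of_span_eq ?_⟩
  have himg : (⇑N.subtype '' Set.range fun i => (⟨s i, hmem i⟩ : ↥N)) = Set.range s := by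
    ext y
    constructor
    · rintro ⟨⟨z, hz⟩, ⟨i, hi⟩, rfl⟩
      exact ⟨i, by simp [← hi]⟩
    · rintro ⟨i, rfl⟩
      exact ⟨⟨s i, hmem i⟩, ⟨i, rfl⟩, rfl⟩
  rw [himg, hs]

lemma mLength_quot_lt_top [IsNoetherianRing R] (n : ℕ) :
    ∀ K : Ideal R, maximalIdeal R ^ n ≤ K → mLength R (R ⧸ K) < ⊤ := by
  induction n with
  | zero =>
    intro K hK
    have hKtop : K = ⊤ := by
      rw [pow_zero, Ideal.one_eq_top] at hK
      exact top_le_iff.mp hK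
    have : Subsingleton (R ⧸ K) := by
      rw [hKtop]
      exact Submodule.Quotient.subsingleton_iff.mpr rfl
    rw [mLength_eq_zero_of_subsingleton]
    exact WithTop.top_pos
  | succ n ih =>
    intro K hK
    set N : Submodule R (R ⧸ K) := Submodule.map K.mkQ (maximalIdeal R ^ n) with hNdef
    have e : ((R ⧸ K) ⧸ N) ≃ₗ[R] R ⧸ (K ⊔ maximalIdeal R ^ n) :=
      Submodule.quotientQuotientEquivQuotientSup K (maximalIdeal R ^ n)
    have hQ : mLength R ((R ⧸ K) ⧸ N) < ⊤ := by
      rw [mLength_eq_of_equiv e]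
      exact ih _ le_sup_right
    have hNfg : N.FG := (IsNoetherian.noetherian (maximalIdeal R ^ n)).map K.mkQ
    obtain ⟨t, g, hg⟩ := exists_fin_span_top hNfg
    have hNlen : mLength R ↥N < ⊤ := by
      refine mLength_lt_top_of_fin t ↥N g hg ?_
      intro x hx w
      ext
      show x • (w : R ⧸ K) = 0
      obtain ⟨w', hw', hww⟩ := Submodule.mem_map.mp w.2
      rw [← hww, Submodule.mkQ_apply, ← Submodule.Quotient.mk_smul,
        Submodule.Quotient.mk_eq_zero]
      have : w' * x ∈ maximalIdeal R ^ n * maximalIdeal R := Ideal.mul_mem_mul hw' hx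
      rw [← pow_succ] at this
      have hx2 : x • w' = w' * x := by rw [smul_eq_mul, mul_comm]
      rw [hx2]
      exact hK this
    calc mLength R (R ⧸ K) ≤ mLength R ↥N + mLength R ((R ⧸ K) ⧸ N) := mLength_le_add N
      _ < ⊤ := by
          rw [ENat.add_lt_top]
          exact ⟨hNlen, hQ⟩

end Fin

section Lech
variable {R : Type u} [CommRing R]

lemma mLength_quot_top : mLength R (R ⧸ (⊤ : Ideal R)) = 0 := by
  have : Subsingleton (R ⧸ (⊤ : Ideal R)) :=
    Submodule.Quotient.subsingleton_iff.mpr rfl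
  exact mLength_eq_zero_of_subsingleton

/-- Key step: `λ(R/(A + (x^{t+1}))) ≤ λ(R/(A + (x^t))) + λ(R/(A + (x)))`. -/
lemma lech_step (A : Ideal R) (x : R) (t : ℕ) :
    mLength R (R ⧸ (A ⊔ Ideal.span {x ^ (t + 1)})) ≤
      mLength R (R ⧸ (A ⊔ Ideal.span {x ^ t})) + mLength R (R ⧸ (A ⊔ Ideal.span {x})) := by
  set B : Ideal R := A ⊔ Ideal.span {x ^ (t + 1)} with hB
  set N : Submodule R (R ⧸ B) := Submodule.map B.mkQ (Ideal.span {x ^ t}) with hN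
  have hBsup : B ⊔ Ideal.span {x ^ t} = A ⊔ Ideal.span {x ^ t} := by
    rw [hB, sup_assoc]
    congr 1
    apply sup_eq_right.mpr
    rw [Ideal.span_singleton_le_span_singleton]
    exact pow_dvd_pow x (by omega)
  have hquot : mLength R ((R ⧸ B) ⧸ N) = mLength R (R ⧸ (A ⊔ Ideal.span {x ^ t})) := by
    rw [mLength_eq_of_equiv (Submodule.quotientQuotientEquivQuotientSup B (Ideal.span {x ^ t})),
      hBsup]
  have hNpart : mLength R ↥N ≤ mLength R (R ⧸ (A ⊔ Ideal.span {x})) := by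
    set f : R →ₗ[R] R ⧸ B := LinearMap.toSpanSingleton R (R ⧸ B) (B.mkQ (x ^ t)) with hf
    have hrange : N = LinearMap.range f := by
      rw [hN, Ideal.span, Submodule.map_span, Set.image_singleton, Submodule.mkQ_apply,
        LinearMap.span_singleton_eq_range]
      rfl
    have e1 : mLength R ↥N = mLength R (R ⧸ LinearMap.ker f) := by
      rw [hrange, mLength_eq_of_equiv f.quotKerEquivRange.symm]
    rw [e1]
    apply mLength_quot_mono
    rw [sup_le_iff]
    constructor
    · intro a ha
      rw [LinearMap.mem_ker, hf]
      show a • B.mkQ (x ^ t) = 0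
      rw [Submodule.mkQ_apply, ← Submodule.Quotient.mk_smul, Submodule.Quotient.mk_eq_zero]
      rw [smul_eq_mul]
      exact Ideal.mul_mem_right _ B ((show A ≤ B from le_sup_left) ha)
    · rw [Ideal.span_le, Set.singleton_subset_iff]
      rw [SetLike.mem_coe, LinearMap.mem_ker, hf]
      show x • B.mkQ (x ^ t) = 0
      rw [Submodule.mkQ_apply, ← Submodule.Quotient.mk_smul, Submodule.Quotient.mk_eq_zero]
      have : x • x ^ t = x ^ (t + 1) := by rw [smul_eq_mul, ← pow_succ']
      rw [this]
      exact (show Ideal.span {x ^ (t + 1)} ≤ B from le_sup_right) (Ideal.subset_span rfl)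
  calc mLength R (R ⧸ B) ≤ mLength R ↥N + mLength R ((R ⧸ B) ⧸ N) := mLength_le_add N
    _ ≤ mLength R (R ⧸ (A ⊔ Ideal.span {x})) + mLength R (R ⧸ (A ⊔ Ideal.span {x ^ t})) := by
        rw [hquot]
        exact add_le_add_left hNpart _
    _ = _ := by rw [add_comm]

lemma lech_pow (A : Ideal R) (x : R) : ∀ t : ℕ,
    mLength R (R ⧸ (A ⊔ Ideal.span {x ^ t})) ≤
      (t : ℕ∞) * mLength R (R ⧸ (A ⊔ Ideal.span {x})) := by
  intro t
  induction t with
  | zero =>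
    have : A ⊔ Ideal.span {x ^ 0} = ⊤ := by
      rw [pow_zero, Ideal.span_singleton_one]
      exact sup_top_eq A
    rw [this, mLength_quot_top]
    simp
  | succ t ih =>
    calc mLength R (R ⧸ (A ⊔ Ideal.span {x ^ (t + 1)}))
        ≤ mLength R (R ⧸ (A ⊔ Ideal.span {x ^ t})) + mLength R (R ⧸ (A ⊔ Ideal.span {x})) :=
          lech_step A x t
      _ ≤ (t : ℕ∞) * mLength R (R ⧸ (A ⊔ Ideal.span {x}))
            + mLength R (R ⧸ (A ⊔ Ideal.span {x})) := add_le_add_left ih _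
      _ = ((t + 1 : ℕ) : ℕ∞) * mLength R (R ⧸ (A ⊔ Ideal.span {x})) := by
          push_cast
          rw [add_one_mul]

lemma fin_succ_span_split (k : ℕ) (g : Fin (k + 1) → R) :
    Ideal.span (Set.range g) = Ideal.span {g 0} ⊔ Ideal.span (Set.range (g ∘ Fin.succ)) := by
  rw [Fin.range_fin_succ, Ideal.span, Submodule.span_insert]
  rfl

lemma lech_multi : ∀ (k : ℕ) (A : Ideal R) (x : Fin k → R) (t : ℕ),
    mLength R (R ⧸ (A ⊔ Ideal.span (Set.range fun i => x i ^ t))) ≤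
      ((t : ℕ∞)) ^ k * mLength R (R ⧸ (A ⊔ Ideal.span (Set.range x))) := by
  intro k
  induction k with
  | zero =>
    intro A x t
    rw [Set.range_eq_empty, Set.range_eq_empty, Ideal.span_empty, sup_bot_eq]
    simp
  | succ k ih =>
    intro A x t
    have h1 : Ideal.span (Set.range fun i => x i ^ t)
        = Ideal.span {x 0 ^ t} ⊔ Ideal.span (Set.range fun i : Fin k => x i.succ ^ t) := by
      rw [fin_succ_span_split k (fun i => x i ^ t)]
      rfl
    have h2 : Ideal.span (Set.range x)
        = Ideal.span {x 0} ⊔ Ideal.span (Set.range fun i : Fin k => x i.succ) := by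
      rw [fin_succ_span_split k x]
      rfl
    calc mLength R (R ⧸ (A ⊔ Ideal.span (Set.range fun i => x i ^ t)))
        = mLength R (R ⧸ ((A ⊔ Ideal.span {x 0 ^ t})
            ⊔ Ideal.span (Set.range fun i : Fin k => x i.succ ^ t))) := by
          rw [h1, sup_assoc]
      _ ≤ (t : ℕ∞) ^ k * mLength R (R ⧸ ((A ⊔ Ideal.span {x 0 ^ t})
            ⊔ Ideal.span (Set.range fun i : Fin k => x i.succ))) :=
          ih _ (fun i => x i.succ) t
      _ = (t : ℕ∞) ^ k * mLength R (R ⧸ ((A ⊔ Ideal.span (Set.range fun i : Fin k => x i.succ))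
            ⊔ Ideal.span {x 0 ^ t})) := by
          rw [sup_right_comm]
      _ ≤ (t : ℕ∞) ^ k * ((t : ℕ∞) * mLength R (R ⧸ ((A
            ⊔ Ideal.span (Set.range fun i : Fin k => x i.succ)) ⊔ Ideal.span {x 0}))) :=
          mul_le_mul_right (lech_pow _ (x 0) t) _
      _ = (t : ℕ∞) ^ (k + 1) * mLength R (R ⧸ (A ⊔ Ideal.span (Set.range x))) := by
          have hre : (A ⊔ Ideal.span (Set.range fun i : Fin k => x i.succ)) ⊔ Ideal.span {x 0}
              = A ⊔ Ideal.span (Set.range x) := by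
            rw [h2, sup_assoc,
              sup_comm (Ideal.span (Set.range fun i : Fin k => x i.succ)) (Ideal.span {x 0})]
          rw [hre, ← mul_assoc, ← pow_succ]

end Lech

section Dim
variable {R : Type u} [CommRing R] [IsNoetherianRing R] [IsLocalRing R]
variable {d : ℕ} {c : R} {I : Ideal R}

lemma prime_chain_le (hd : ringKrullDim R = d) (q : LTSeries (PrimeSpectrum R)) :
    q.length ≤ d := by
  have h := Order.LTSeries.length_le_krullDim q
  rw [show Order.krullDim (PrimeSpectrum R) = ringKrullDim R from rfl, hd] at h
  exact_mod_cast h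

lemma minimalPrimes_finite (A : Ideal R) : A.minimalPrimes.Finite := by
  rw [Ideal.minimalPrimes_eq_comap]
  exact (minimalPrimes.finite_of_isNoetherianRing (R ⧸ A)).image _

lemma exists_param (hc : ∀ P ∈ minimalPrimes R, c ∉ P) (hI : I.radical = maximalIdeal R)
    (j : ℕ) : ∃ x : Fin j → R, (∀ i, x i ∈ I) ∧
    ∀ P ∈ (Ideal.span {c} ⊔ Ideal.span (Set.range x)).minimalPrimes,
      P = maximalIdeal R ∨ ∃ q : LTSeries (PrimeSpectrum R),
        q.length = j + 1 ∧ (q.last).asIdeal = P := by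
  induction j with
  | zero =>
    refine ⟨Fin.elim0, fun i => i.elim0, ?_⟩
    intro P hP
    right
    have hPp : P.IsPrime := hP.1.1
    have hcP : c ∈ P := hP.1.2 ((show Ideal.span {c} ≤ _ from le_sup_left).trans le_rfl
      (Ideal.subset_span rfl))
    obtain ⟨Q, hQ, hQP⟩ := Ideal.exists_minimalPrimes_le (I := (⊥ : Ideal R)) bot_le (J := P)
    have hQp : Q.IsPrime := hQ.1.1
    have hcQ : c ∉ Q := hc Q hQ
    have hlt : Q < P := lt_of_le_of_ne hQP (fun h => hcQ (h ▸ hcP))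
    refine ⟨(RelSeries.singleton _ ⟨Q, hQp⟩).snoc ⟨P, hPp⟩ ?_, ?_, ?_⟩
    · show (RelSeries.singleton _ (⟨Q, hQp⟩ : PrimeSpectrum R)).last < ⟨P, hPp⟩
      rw [RelSeries.last_singleton]
      exact hlt
    · simp [RelSeries.snoc_length]
    · rw [RelSeries.last_snoc]
  | succ j ih =>
    obtain ⟨x, hxI, hinv⟩ := ih
    set A : Ideal R := Ideal.span {c} ⊔ Ideal.span (Set.range x) with hA
    have hfin : (A.minimalPrimes \ {maximalIdeal R}).Finite :=
      (minimalPrimes_finite A).sdiff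
    -- prime avoidance: find y ∈ I avoiding all minimal primes of A other than m
    have havoid : ∃ y ∈ I, ∀ P ∈ A.minimalPrimes \ {maximalIdeal R}, y ∉ P := by
      have hnotle : ∀ P ∈ A.minimalPrimes \ {maximalIdeal R}, ¬ I ≤ P := by
        rintro P ⟨hP, hPm⟩ hle
        have hPp : P.IsPrime := hP.1.1
        have : maximalIdeal R ≤ P := by
          rw [← hI]
          calc I.radical ≤ P.radical := Ideal.radical_mono hle
            _ = P := hPp.radical
        exact hPm ((maximalIdeal.isMaximal R).eq_of_le hPp.ne_top this).symm
      by_contra hcon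
      push_neg at hcon
      have hsub : (I : Set R) ⊆ ⋃ P ∈ (↑hfin.toFinset : Set (Ideal R)), (P : Set R) := by
        intro y hy
        obtain ⟨P, hP, hyP⟩ := hcon y hy
        exact Set.mem_biUnion (by simpa using hfin.mem_toFinset.mpr hP) hyP
      rw [Ideal.subset_union_prime (f := fun P : Ideal R => P) ⊥ ⊥
        (fun P hP _ _ => (hfin.mem_toFinset.mp hP).1.1.1)] at hsub
      obtain ⟨P, hP, hle⟩ := hsub
      exact hnotle P (hfin.mem_toFinset.mp hP) hle
    obtain ⟨y, hyI, hyavoid⟩ := havoid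
    refine ⟨Fin.cons y x, ?_, ?_⟩
    · intro i
      induction i using Fin.cases with
      | zero => simpa using hyI
      | succ i => simpa using hxI i
    · intro P hP
      have hPp : P.IsPrime := hP.1.1
      have hsplit : Ideal.span {c} ⊔ Ideal.span (Set.range (Fin.cons y x : Fin (j+1) → R))
          = A ⊔ Ideal.span {y} := by
        have h1 : Ideal.span (Set.range (Fin.cons y x : Fin (j+1) → R))
            = Ideal.span {y} ⊔ Ideal.span (Set.range x) := by
          rw [Fin.range_fin_succ, Ideal.span, Submodule.span_insert]
          rfl
        rw [h1, sup_comm (Ideal.span {y}) (Ideal.span (Set.range x)), ← sup_assoc]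
      have hAP : A ≤ P := by
        refine le_trans ?_ hP.1.2
        rw [hsplit]
        exact le_sup_left
      have hyP : y ∈ P := by
        apply hP.1.2
        rw [hsplit]
        exact (show Ideal.span {y} ≤ _ from le_sup_right) (Ideal.subset_span rfl)
      obtain ⟨Q, hQ, hQP⟩ := Ideal.exists_minimalPrimes_le hAP
      by_cases hQm : Q = maximalIdeal R
      · left
        have : maximalIdeal R ≤ P := hQm ▸ hQP
        exact ((maximalIdeal.isMaximal R).eq_of_le hPp.ne_top this).symm
      · right
        rcases hinv Q hQ with h | ⟨q, hqlen, hqlast⟩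
        · exact absurd h hQm
        · have hyQ : y ∉ Q := hyavoid Q ⟨hQ, hQm⟩
          have hlt : Q < P := lt_of_le_of_ne hQP (fun h => hyQ (h ▸ hyP))
          refine ⟨q.snoc ⟨P, hPp⟩ ?_, ?_, ?_⟩
          · show q.last < (⟨P, hPp⟩ : PrimeSpectrum R)
            have : q.last.asIdeal < P := hqlast ▸ hlt
            exact this
          · simp [RelSeries.snoc_length, hqlen]
          · rw [RelSeries.last_snoc]

lemma sop_final (hd : ringKrullDim R = d) (hc : ∀ P ∈ minimalPrimes R, c ∉ P)
    (hcm : c ∈ maximalIdeal R) (hI : I.radical = maximalIdeal R) :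
    1 ≤ d ∧ ∃ x : Fin (d - 1) → R, (∀ i, x i ∈ I) ∧
      maximalIdeal R ≤ (Ideal.span {c} ⊔ Ideal.span (Set.range x)).radical := by
  have hmp : (maximalIdeal R).IsPrime := (maximalIdeal.isMaximal R).isPrime
  have hd1 : 1 ≤ d := by
    obtain ⟨Q, hQ, hQm⟩ := Ideal.exists_minimalPrimes_le (I := (⊥ : Ideal R)) bot_le
      (J := maximalIdeal R)
    have hQp : Q.IsPrime := hQ.1.1
    have hlt : Q < maximalIdeal R := lt_of_le_of_ne hQm (fun h => (hc Q hQ) (h ▸ hcm))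
    have := prime_chain_le hd ((RelSeries.singleton _ ⟨Q, hQp⟩).snoc ⟨maximalIdeal R, hmp⟩
      (by rw [RelSeries.last_singleton]; exact hlt))
    simpa [RelSeries.snoc_length] using this
  obtain ⟨x, hxI, hinv⟩ := exists_param hc hI (d - 1)
  refine ⟨hd1, x, hxI, ?_⟩
  have hall : ∀ P ∈ (Ideal.span {c} ⊔ Ideal.span (Set.range x)).minimalPrimes,
      P = maximalIdeal R := by
    intro P hP
    rcases hinv P hP with h | ⟨q, hqlen, hqlast⟩
    · exact h
    · by_contra hPm
      have hPp : P.IsPrime := hP.1.1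
      have hPle : P ≤ maximalIdeal R := le_maximalIdeal hPp.ne_top
      have hlt : P < maximalIdeal R := lt_of_le_of_ne hPle hPm
      have hext : q.last < (⟨maximalIdeal R, hmp⟩ : PrimeSpectrum R) := by
        show q.last.asIdeal < maximalIdeal R
        rw [hqlast]
        exact hlt
      have hlen := prime_chain_le hd (q.snoc ⟨maximalIdeal R, hmp⟩ hext)
      simp only [RelSeries.snoc_length, hqlen] at hlen
      omega
  rw [← Ideal.sInf_minimalPrimes]
  apply le_sInf
  intro P hP
  rw [hall P hP]

end Dim

/-- with a test element, `λ(R/(I^{[q]})^*)/q^d` converges to the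
Hilbert–Kunz multiplicity `e_HK(I) = lim λ(R/I^{[q]})/q^d`. -/
theorem stmt8 (R : Type*) [CommRing R] [IsNoetherianRing R] [IsLocalRing R]
    (p : ℕ) (hp : p.Prime) [CharP R p]
    (d : ℕ) (hd : ringKrullDim R = d)
    (htest : ∃ c : R, IsTestElement p c)
    (I : Ideal R) (hI : I.radical = maximalIdeal R)
    (eHK : ℝ)
    (hHK : Tendsto (fun e : ℕ =>
        ((mLength R (R ⧸ frobPow (p ^ e) I)).toNat : ℝ) / (p : ℝ) ^ (e * d))
      atTop (nhds eHK)) :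
    Tendsto (fun e : ℕ =>
        ((mLength R (R ⧸ Ideal.span (tightClosure p (frobPow (p ^ e) I)))).toNat : ℝ)
          / (p : ℝ) ^ (e * d)) atTop (nhds eHK) := by
  classical
  obtain ⟨c, hcmin, hctest⟩ := htest
  set J : ℕ → Ideal R := fun e => frobPow (p ^ e) I with hJ
  set T : ℕ → Ideal R := fun e => Ideal.span (tightClosure p (J e)) with hT
  -- J e ≤ T e
  have hJT : ∀ e, J e ≤ T e := by
    intro e y hy
    apply Ideal.subset_span
    refine ⟨1, fun P hP h1 => hP.1.1.ne_top ((Ideal.eq_top_iff_one _).mpr h1), 0, fun e' _ => ?_⟩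
    rw [one_mul]
    exact Ideal.subset_span ⟨y, hy, rfl⟩
  -- m-primariness of J e
  have hJfin : ∀ e, mLength R (R ⧸ J e) < ⊤ := by
    intro e
    have hrad : maximalIdeal R ≤ (J e).radical := by
      intro z hz
      rw [← hI] at hz
      obtain ⟨k, hk⟩ := hz
      refine ⟨k * p ^ e, ?_⟩
      rw [pow_mul]
      exact Ideal.subset_span ⟨z ^ k, hk, rfl⟩
    obtain ⟨n, hn⟩ := Ideal.exists_pow_le_of_le_radical_of_fg hrad
      (IsNoetherian.noetherian _)
    exact mLength_quot_lt_top n _ hn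
  have hTfin : ∀ e, mLength R (R ⧸ T e) < ⊤ :=
    fun e => lt_of_le_of_lt (mLength_quot_mono (hJT e)) (hJfin e)
  -- key splitting inequality
  have hkey : ∀ e, mLength R (R ⧸ J e) ≤
      mLength R (R ⧸ T e) + mLength R (R ⧸ (J e ⊔ Ideal.span {c})) := by
    intro e
    set B : Ideal R := J e with hB
    set N : Submodule R (R ⧸ B) := Submodule.map B.mkQ (Ideal.span {c}) with hN
    have hquot : mLength R ((R ⧸ B) ⧸ N) = mLength R (R ⧸ (B ⊔ Ideal.span {c})) :=
      mLength_eq_of_equiv (Submodule.quotientQuotientEquivQuotientSup B (Ideal.span {c}))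
    have hNle : mLength R ↥N ≤ mLength R (R ⧸ T e) := by
      set f : R →ₗ[R] R ⧸ B := LinearMap.toSpanSingleton R (R ⧸ B) (B.mkQ c) with hf
      have hrange : N = LinearMap.range f := by
        rw [hN, Ideal.span, Submodule.map_span, Set.image_singleton,
          Submodule.mkQ_apply, LinearMap.span_singleton_eq_range]
        rfl
      have e1 : mLength R ↥N = mLength R (R ⧸ LinearMap.ker f) := by
        rw [hrange, mLength_eq_of_equiv f.quotKerEquivRange.symm]
      rw [e1]
      apply mLength_quot_mono
      rw [hT, Ideal.span_le]
      intro z hz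
      rw [SetLike.mem_coe, LinearMap.mem_ker, hf]
      show z • B.mkQ c = 0
      rw [Submodule.mkQ_apply, ← Submodule.Quotient.mk_smul, Submodule.Quotient.mk_eq_zero,
        smul_eq_mul, mul_comm]
      exact hctest (J e) z hz
    calc mLength R (R ⧸ B) ≤ mLength R ↥N + mLength R ((R ⧸ B) ⧸ N) := mLength_le_add N
      _ ≤ mLength R (R ⧸ T e) + mLength R (R ⧸ (B ⊔ Ideal.span {c})) := by
          rw [hquot]
          exact add_le_add_left hNle _
  by_cases hc : IsUnit c
  · -- unit case : T e = J e
    have hTJ : ∀ e, T e = J e := by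
      intro e
      refine le_antisymm ?_ (hJT e)
      rw [hT, Ideal.span_le]
      intro z hz
      obtain ⟨u, rfl⟩ := hc
      have h1 : (↑u : R) * z ∈ J e := hctest (J e) z hz
      have h2 := (J e).mul_mem_left (↑u⁻¹ : R) h1
      rwa [← mul_assoc, Units.inv_mul, one_mul] at h2
    have hfun : (fun e : ℕ =>
        ((mLength R (R ⧸ Ideal.span (tightClosure p (frobPow (p ^ e) I)))).toNat : ℝ)
          / (p : ℝ) ^ (e * d))
        = fun e : ℕ => ((mLength R (R ⧸ frobPow (p ^ e) I)).toNat : ℝ) / (p : ℝ) ^ (e * d) := by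
      funext e
      have h1 := hTJ e
      simp only [hT, hJ] at h1
      rw [h1]
    rw [hfun]
    exact hHK
  · -- c is a nonunit
    have hcm : c ∈ maximalIdeal R := (mem_maximalIdeal c).mpr hc
    obtain ⟨hd1, x, hxI, hrad⟩ := sop_final hd hcmin hcm hI
    set A : Ideal R := Ideal.span {c} ⊔ Ideal.span (Set.range x) with hA
    obtain ⟨n, hn⟩ := Ideal.exists_pow_le_of_le_radical_of_fg hrad (IsNoetherian.noetherian _)
    have hC : mLength R (R ⧸ A) < ⊤ := mLength_quot_lt_top n _ hn
    set C0 : ℕ := (mLength R (R ⧸ A)).toNat with hC0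
    have hC0' : mLength R (R ⧸ A) = (C0 : ℕ∞) := (ENat.coe_toNat hC.ne).symm
    -- delta bound
    have hdelta : ∀ e, mLength R (R ⧸ (J e ⊔ Ideal.span {c})) ≤
        ((p ^ (e * (d - 1)) * C0 : ℕ) : ℕ∞) := by
      intro e
      have hKle : Ideal.span {c} ⊔ Ideal.span (Set.range fun i => x i ^ p ^ e)
          ≤ J e ⊔ Ideal.span {c} := by
        rw [sup_le_iff]
        refine ⟨le_sup_right, le_trans ?_ le_sup_left⟩
        rw [Ideal.span_le]
        rintro z ⟨i, rfl⟩
        exact Ideal.subset_span ⟨x i, hxI i, rfl⟩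
      calc mLength R (R ⧸ (J e ⊔ Ideal.span {c}))
          ≤ mLength R (R ⧸ (Ideal.span {c} ⊔ Ideal.span (Set.range fun i => x i ^ p ^ e))) :=
            mLength_quot_mono hKle
        _ ≤ ((p ^ e : ℕ∞)) ^ (d - 1) * mLength R (R ⧸ (Ideal.span {c}
              ⊔ Ideal.span (Set.range x))) := by
            have h := lech_multi (d - 1) (Ideal.span {c}) x (p ^ e)
            exact_mod_cast h
        _ = ((p ^ (e * (d - 1)) * C0 : ℕ) : ℕ∞) := by
            rw [← hA, hC0']
            push_cast
            rw [← pow_mul]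
    -- natural number inequalities
    set F : ℕ → ℕ := fun e => (mLength R (R ⧸ J e)).toNat with hF
    set G : ℕ → ℕ := fun e => (mLength R (R ⧸ T e)).toNat with hG
    have hcoeF : ∀ e, (F e : ℕ∞) = mLength R (R ⧸ J e) := fun e => ENat.coe_toNat (hJfin e).ne
    have hcoeG : ∀ e, (G e : ℕ∞) = mLength R (R ⧸ T e) := fun e => ENat.coe_toNat (hTfin e).ne
    have hGF : ∀ e, G e ≤ F e := by
      intro e
      rw [hG, hF]
      exact ENat.toNat_le_toNat (mLength_quot_mono (hJT e)) (hJfin e).ne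
    have hFle : ∀ e, F e ≤ G e + p ^ (e * (d - 1)) * C0 := by
      intro e
      have h1 : (F e : ℕ∞) ≤ ((G e + p ^ (e * (d - 1)) * C0 : ℕ) : ℕ∞) := by
        rw [hcoeF]
        push_cast
        calc mLength R (R ⧸ J e)
            ≤ mLength R (R ⧸ T e) + mLength R (R ⧸ (J e ⊔ Ideal.span {c})) := hkey e
          _ ≤ (G e : ℕ∞) + ((p : ℕ∞) ^ (e * (d - 1)) * (C0 : ℕ∞)) := by
              apply add_le_add
              · rw [hcoeG]
              · have := hdelta e
                push_cast at this ⊢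
                exact this
      exact_mod_cast h1
    -- real analysis
    have hppos : (0 : ℝ) < p := by exact_mod_cast hp.pos
    have hp1 : (1 : ℝ) < p := by exact_mod_cast hp.one_lt
    have hpowpos : ∀ e : ℕ, (0 : ℝ) < (p : ℝ) ^ (e * d) := fun e => pow_pos hppos _
    have hde : ∀ e : ℕ, e * (d - 1) + e = e * d := by
      intro e
      rw [← Nat.mul_succ]
      congr 1
      omega
    have hzero : Tendsto (fun e : ℕ => (C0 : ℝ) * (1 / p) ^ e) atTop (nhds 0) := by
      have h0 : Tendsto (fun e : ℕ => ((1 : ℝ) / p) ^ e) atTop (nhds 0) := by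
        apply tendsto_pow_atTop_nhds_zero_of_lt_one
        · positivity
        · rw [div_lt_one hppos]
          exact hp1
      have := h0.const_mul (C0 : ℝ)
      simpa using this
    have hlow : Tendsto (fun e : ℕ =>
        ((F e : ℝ) / (p : ℝ) ^ (e * d)) - (C0 : ℝ) * (1 / p) ^ e) atTop (nhds eHK) := by
      have := hHK.sub hzero
      rw [sub_zero] at this
      exact this
    -- the two pointwise bounds
    have hub : ∀ e : ℕ, ((mLength R (R ⧸ Ideal.span (tightClosure p (frobPow (p ^ e) I)))).toNat
        : ℝ) / (p : ℝ) ^ (e * d) ≤ (F e : ℝ) / (p : ℝ) ^ (e * d) := by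
      intro e
      apply div_le_div_of_nonneg_right ?_ (hpowpos e).le
      exact_mod_cast hGF e
    have hlb : ∀ e : ℕ, ((F e : ℝ) / (p : ℝ) ^ (e * d)) - (C0 : ℝ) * (1 / p) ^ e ≤
        ((mLength R (R ⧸ Ideal.span (tightClosure p (frobPow (p ^ e) I)))).toNat
        : ℝ) / (p : ℝ) ^ (e * d) := by
      intro e
      rw [sub_le_iff_le_add]
      have hsplit : (p : ℝ) ^ (e * d) = (p : ℝ) ^ (e * (d - 1)) * (p : ℝ) ^ e := by
        rw [← pow_add, hde]
      have h2 : (F e : ℝ) ≤ (G e : ℝ) + (p : ℝ) ^ (e * (d - 1)) * C0 := by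
        exact_mod_cast hFle e
      calc (F e : ℝ) / (p : ℝ) ^ (e * d)
          ≤ ((G e : ℝ) + (p : ℝ) ^ (e * (d - 1)) * C0) / (p : ℝ) ^ (e * d) :=
            div_le_div_of_nonneg_right h2 (hpowpos e).le
        _ = (G e : ℝ) / (p : ℝ) ^ (e * d) + (C0 : ℝ) * (1 / p) ^ e := by
            rw [add_div]
            congr 1
            rw [hsplit]
            field_simp
            rw [mul_assoc, ← mul_pow, mul_one_div_cancel hppos.ne', one_pow, mul_one]
        _ = _ := rfl
    exact tendsto_of_tendsto_of_tendsto_of_le_of_le hlow hHK hlb hub
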